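/- In the candidate probability model, for each candidate c ∈ C and integer r with 0 ≤ r ≤ n, define q_c(r) = Σ_{T ⊆ V, |T| = r} ∏_{i ∈ T} p_{i,c} · ∏_{i ∈ V \ T} (1 − p_{i,c}) (the probability that AS(c) = r). Then for every committee W ⊆ C with |W| = k, the probability that W is SWM satisfies: Σ_{A} w(A)·1[W is SWM in A] = Σ_{t=0}^{n} ( ∏_{c ∈ W} (Σ_{r=t}^{n} q_c(r)) − ∏_{c ∈ W} (Σ_{r=t+1}^{n} q_c(r)) ) · ∏_{c ∈ C \ W} (Σ_{r=0}^{t} q_c(r)), where the left-hand sum ranges over all approval profiles A. -/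

import Mathlib

/-- The social welfare of committee `W` in profile `A`. -/
def socialWelfare {V C : Type*} [Fintype V] [DecidableEq C]
    (A : V → Finset C) (W : Finset C) : ℕ :=
  ∑ i : V, (W ∩ A i).card

/-- `W` is social-welfare maximizing (among committees of size `k`) in profile `A`. -/
def isSWM {V C : Type*} [Fintype V] [DecidableEq C]
    (k : ℕ) (A : V → Finset C) (W : Finset C) : Prop :=
  ∀ W' : Finset C, W'.card = k → socialWelfare A W' ≤ socialWelfare A W

open scoped Classical

/-- The probability that candidate `c` receives approval score exactly `r` in the candidate
probability model: `q_c(r) = Σ_{T ⊆ V, |T| = r} ∏_{i ∈ T} p_{i,c} ∏_{i ∈ V \ T} (1 − p_{i,c})`. -/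
noncomputable def qscore {V C : Type*} [Fintype V] [DecidableEq V]
    (p : V → C → ℝ) (c : C) (r : ℕ) : ℝ :=
  ∑ T ∈ (Finset.univ : Finset V).powersetCard r,
    (∏ i ∈ T, p i c) * ∏ i ∈ Tᶜ, (1 - p i c)

/-!
Read column-wise, a profile is an independent choice of an approver set for each candidate, and
its weight factors accordingly; so the total weight of the profiles in which every score
`AS(c)` lies in a prescribed set `S_c` is `∏_c Σ_{r ∈ S_c} q_c(r)`. A committee `W` of size `k`
is SWM iff every non-member scores at most the minimum score `m` of the members. Splitting by
the value `t = m` and writing `[m = t] = [m ≥ t] - [m ≥ t + 1]` expresses the SWM indicator as a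
sum over `t` of differences of two indicators of that product form.
-/

open Finset

theorem Finset.sum_le_sum_of_card_eq_of_forall_notMem_le {ι M : Type*} [DecidableEq ι]
    [AddCommMonoid M] [LinearOrder M] [IsOrderedAddMonoid M] {s t : Finset ι} {f : ι → M}
    (hst : #t = #s) (h : ∀ a ∈ s, ∀ b ∉ s, f b ≤ f a) :
    ∑ b ∈ t, f b ≤ ∑ a ∈ s, f a := by
  have hcard : #(t \ s) = #(s \ t) := card_sdiff_comm hst
  have hout : ∑ b ∈ t \ s, f b ≤ ∑ a ∈ s \ t, f a := by
    rcases (s \ t).eq_empty_or_nonempty with hempty | hne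
    · rw [hempty, card_empty, card_eq_zero] at hcard
      rw [hempty, hcard]
    · obtain ⟨a₀, ha₀, hmin⟩ := exists_min_image _ f hne
      calc ∑ b ∈ t \ s, f b ≤ #(t \ s) • f a₀ :=
            sum_le_card_nsmul _ _ _ fun b hb => h a₀ (mem_sdiff.1 ha₀).1 b (mem_sdiff.1 hb).2
        _ = #(s \ t) • f a₀ := by rw [hcard]
        _ ≤ ∑ a ∈ s \ t, f a := card_nsmul_le_sum _ _ _ hmin
  rw [← sum_inter_add_sum_sdiff t s, ← sum_inter_add_sum_sdiff s t, inter_comm]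
  exact add_le_add le_rfl hout

theorem Finset.sum_range_ite_le_sub_ite_lt {R : Type*} [AddCommGroup R] [One R] {m n : ℕ}
    (hm : m ≤ n) (P : ℕ → Prop) [DecidablePred P] :
    ∑ t ∈ range (n + 1), ((if t ≤ m ∧ P t then (1 : R) else 0) - if t < m ∧ P t then 1 else 0)
      = if P m then 1 else 0 := by
  have hterm : ∀ t, ((if t ≤ m ∧ P t then (1 : R) else 0) - if t < m ∧ P t then 1 else 0)
      = if m = t then (if P t then 1 else 0) else 0 := by
    intro t
    rcases lt_trichotomy t m with h | rfl | h
    · simp [h, h.le, h.ne']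
    · simp
    · simp [h.not_ge, h.not_gt, h.ne]
  simp_rw [hterm]
  rw [sum_ite_eq, if_pos (mem_range.2 (Nat.lt_succ_of_le hm))]

section Approval

variable {V C : Type*} [Fintype V] [DecidableEq C]

def approvers (A : V → Finset C) (c : C) : Finset V := {i | c ∈ A i}

def approvalScore (A : V → Finset C) (c : C) : ℕ := #(approvers A c)

theorem approvalScore_le_card (A : V → Finset C) (c : C) :
    approvalScore A c ≤ Fintype.card V :=
  card_le_univ _

theorem socialWelfare_eq_sum_approvalScore (A : V → Finset C) (W : Finset C) :
    socialWelfare A W = ∑ c ∈ W, approvalScore A c := by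
  simp only [socialWelfare, approvalScore, approvers, card_filter, ← filter_mem_eq_inter]
  exact sum_comm

theorem isSWM_iff_forall_approvalScore_le {k : ℕ} {A : V → Finset C} {W : Finset C}
    (hW : #W = k) :
    isSWM k A W ↔ ∀ c ∈ W, ∀ c' ∉ W, approvalScore A c' ≤ approvalScore A c := by
  simp only [isSWM, socialWelfare_eq_sum_approvalScore]
  refine ⟨fun h c hc c' hc' => ?_, fun h W' hW' =>
    sum_le_sum_of_card_eq_of_forall_notMem_le (hW'.trans hW.symm) h⟩
  have hc'W : c' ∉ W.erase c := fun h' => hc' (mem_of_mem_erase h')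
  have hswap : #(insert c' (W.erase c)) = k := by
    rw [card_insert_of_notMem hc'W, card_erase_of_mem hc, ← hW]
    exact Nat.sub_add_cancel (card_pos.2 ⟨c, hc⟩)
  have := h _ hswap
  rw [sum_insert hc'W, ← add_sum_erase W _ hc] at this
  omega

theorem prod_ite_mem_approvers [DecidableEq V] (p : V → C → ℝ) (A : V → Finset C) (c : C) :
    ∏ i, (if c ∈ A i then p i c else 1 - p i c)
      = (∏ i ∈ approvers A c, p i c) * ∏ i ∈ (approvers A c)ᶜ, (1 - p i c) := by
  rw [prod_ite, filter_not, compl_eq_univ_sdiff]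
  rfl

end Approval

theorem sum_mul_card_eq_sum_qscore {V C : Type*} [Fintype V] [DecidableEq V] (p : V → C → ℝ)
    (c : C) (φ : ℕ → ℝ) :
    ∑ T : Finset V, ((∏ i ∈ T, p i c) * ∏ i ∈ Tᶜ, (1 - p i c)) * φ #T
      = ∑ r ∈ range (Fintype.card V + 1), qscore p c r * φ r := by
  rw [← powerset_univ, sum_powerset, card_univ]
  refine sum_congr rfl fun r _ => ?_
  rw [qscore, sum_mul]
  exact sum_congr rfl fun T hT => by rw [(mem_powersetCard.1 hT).2]

section Factorization

variable {V C : Type*} [Fintype V] [DecidableEq V] [Fintype C] [DecidableEq C]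

def approversEquiv : (V → Finset C) ≃ (C → Finset V) where
  toFun := approvers
  invFun g i := {c | i ∈ g c}
  left_inv A := by ext; simp [approvers]
  right_inv g := by ext; simp [approvers]

noncomputable def profileWeight (p : V → C → ℝ) (A : V → Finset C) : ℝ :=
  ∏ i, ∏ c, if c ∈ A i then p i c else 1 - p i c

theorem sum_profileWeight_mul_prod (p : V → C → ℝ) (f : C → ℕ → ℝ) :
    ∑ A, profileWeight p A * ∏ c, f c (approvalScore A c)
      = ∏ c, ∑ r ∈ range (Fintype.card V + 1), qscore p c r * f c r := by
  let ψ : ∀ c : C, Finset V → ℝ := fun c T => ((∏ i ∈ T, p i c) * ∏ i ∈ Tᶜ, (1 - p i c)) * f c #T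
  calc ∑ A, profileWeight p A * ∏ c, f c (approvalScore A c)
      = ∑ A, ∏ c, ψ c (approversEquiv A c) := by
        refine sum_congr rfl fun A _ => ?_
        simp only [profileWeight, prod_comm (s := (univ : Finset V)), prod_ite_mem_approvers,
          ← prod_mul_distrib]
        rfl
    _ = ∑ g : C → Finset V, ∏ c, ψ c (g c) := approversEquiv.sum_comp fun g => ∏ c, ψ c (g c)
    _ = ∏ c, ∑ T, ψ c T := (Fintype.prod_sum ψ).symm
    _ = _ := prod_congr rfl fun c _ => sum_mul_card_eq_sum_qscore p c (f c)

theorem sum_profileWeight_mul_ite_and (p : V → C → ℝ) (W : Finset C) (P Q : ℕ → Prop)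
    [DecidablePred P] [DecidablePred Q] :
    ∑ A, profileWeight p A *
        (if (∀ c ∈ W, P (approvalScore A c)) ∧ ∀ c ∉ W, Q (approvalScore A c) then 1 else 0)
      = (∏ c ∈ W, ∑ r ∈ range (Fintype.card V + 1) with P r, qscore p c r) *
          ∏ c ∈ Wᶜ, ∑ r ∈ range (Fintype.card V + 1) with Q r, qscore p c r := by
  let f : C → ℕ → ℝ := fun c r => if c ∈ W then (if P r then 1 else 0) else if Q r then 1 else 0
  have hf : ∀ A : V → Finset C, ∏ c, f c (approvalScore A c)
      = if (∀ c ∈ W, P (approvalScore A c)) ∧ ∀ c ∉ W, Q (approvalScore A c) then 1 else 0 := by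
    intro A
    rw [← prod_mul_prod_compl W, prod_congr rfl fun c hc => if_pos hc,
      prod_congr rfl fun c hc => if_neg (mem_compl.1 hc), prod_boole, prod_boole,
      ite_zero_mul_ite_zero, mul_one]
    simp only [mem_compl]
  simp_rw [← hf, sum_profileWeight_mul_prod, sum_filter, ← prod_mul_prod_compl W]
  congr 1
  · exact prod_congr rfl fun c hc => by simp [f, hc]
  · exact prod_congr rfl fun c hc => by simp [f, mem_compl.1 hc]

end Factorization

theorem ite_isSWM_eq_sum_range {V C : Type*} [Fintype V] [Fintype C] [DecidableEq C] {k : ℕ}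
    {A : V → Finset C} {W : Finset C} (hW : #W = k) (hne : W.Nonempty) :
    (if isSWM k A W then (1 : ℝ) else 0)
      = ∑ t ∈ range (Fintype.card V + 1),
          ((if (∀ c ∈ W, t ≤ approvalScore A c) ∧ ∀ c ∉ W, approvalScore A c ≤ t then 1 else 0)
            - if (∀ c ∈ W, t + 1 ≤ approvalScore A c) ∧ ∀ c ∉ W, approvalScore A c ≤ t
              then 1 else 0) := by
  set m := W.inf' hne (approvalScore A)
  have hle_m : ∀ u, (∀ c ∈ W, u ≤ approvalScore A c) ↔ u ≤ m := fun u => (le_inf'_iff _ _).symm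
  have hswm : isSWM k A W ↔ ∀ c' ∉ W, approvalScore A c' ≤ m :=
    (isSWM_iff_forall_approvalScore_le hW).trans
      ⟨fun h c' hc' => (hle_m _).1 fun c hc => h c hc c' hc',
        fun h c hc c' hc' => (hle_m _).2 (h c' hc') c hc⟩
  have hm : m ≤ Fintype.card V := (inf'_le _ hne.choose_spec).trans (approvalScore_le_card A _)
  simp_rw [hle_m, Nat.add_one_le_iff, hswm]
  exact (sum_range_ite_le_sub_ite_lt hm fun t => ∀ c ∉ W, approvalScore A c ≤ t).symm

theorem swm_prob_formula_candidate_probability_general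
    {V C : Type*} [Fintype V] [DecidableEq V] [Fintype C] [DecidableEq C]
    (k : ℕ) (hk1 : 1 ≤ k)
    (p : V → C → ℝ)
    (W : Finset C) (hW : W.card = k) :
    ∑ A : V → Finset C,
        (∏ i : V, ∏ c : C, (if c ∈ A i then p i c else 1 - p i c)) *
          (if isSWM k A W then (1 : ℝ) else 0)
      = ∑ t ∈ Finset.range (Fintype.card V + 1),
          ((∏ c ∈ W, ∑ r ∈ Finset.Icc t (Fintype.card V), qscore p c r) -
            ∏ c ∈ W, ∑ r ∈ Finset.Icc (t + 1) (Fintype.card V), qscore p c r) *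
          ∏ c ∈ Wᶜ, ∑ r ∈ Finset.range (t + 1), qscore p c r := by
  set n := Fintype.card V
  have hne : W.Nonempty := card_pos.1 (hW ▸ hk1)
  have hfilter_ge : ∀ u, {r ∈ range (n + 1) | u ≤ r} = Icc u n := fun u => by
    ext r; simp only [mem_filter, mem_range, mem_Icc]; omega
  have hfilter_le : ∀ t ∈ range (n + 1), {r ∈ range (n + 1) | r ≤ t} = range (t + 1) :=
    fun t ht => by ext r; simp only [mem_filter, mem_range] at ht ⊢; omega
  calc _ = ∑ A, profileWeight p A * ∑ t ∈ range (n + 1),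
          ((if (∀ c ∈ W, t ≤ approvalScore A c) ∧ ∀ c ∉ W, approvalScore A c ≤ t then 1 else 0)
            - if (∀ c ∈ W, t + 1 ≤ approvalScore A c) ∧ ∀ c ∉ W, approvalScore A c ≤ t
              then 1 else 0) := by
        simp_rw [ite_isSWM_eq_sum_range hW hne]; rfl
    _ = _ := by
      simp_rw [mul_sum, mul_sub]
      rw [sum_comm]
      refine sum_congr rfl fun t ht => ?_
      rw [sum_sub_distrib, sum_profileWeight_mul_ite_and p W (t ≤ ·) (· ≤ t),
        sum_profileWeight_mul_ite_and p W (t + 1 ≤ ·) (· ≤ t), ← sub_mul, hfilter_ge,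
        hfilter_ge, hfilter_le t ht]

/-- In the candidate probability model, the probability that a committee `W`
of size `k` is SWM equals
`Σ_{t=0}^{n} (∏_{c ∈ W} Σ_{r=t}^{n} q_c(r) − ∏_{c ∈ W} Σ_{r=t+1}^{n} q_c(r)) · ∏_{c ∉ W} Σ_{r=0}^{t} q_c(r)`. -/
theorem swm_prob_formula_candidate_probability
    {V C : Type*} [Fintype V] [DecidableEq V] [Fintype C] [DecidableEq C]
    (k : ℕ) (hk1 : 1 ≤ k) (hkm : k ≤ Fintype.card C)
    (p : V → C → ℝ) (hp : ∀ i c, 0 ≤ p i c ∧ p i c ≤ 1)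
    (W : Finset C) (hW : W.card = k) :
    ∑ A : V → Finset C,
        (∏ i : V, ∏ c : C, (if c ∈ A i then p i c else 1 - p i c)) *
          (if isSWM k A W then (1 : ℝ) else 0)
      = ∑ t ∈ Finset.range (Fintype.card V + 1),
          ((∏ c ∈ W, ∑ r ∈ Finset.Icc t (Fintype.card V), qscore p c r) -
            ∏ c ∈ W, ∑ r ∈ Finset.Icc (t + 1) (Fintype.card V), qscore p c r) *
          ∏ c ∈ Wᶜ, ∑ r ∈ Finset.range (t + 1), qscore p c r :=
  swm_prob_formula_candidate_probability_general k hk1 p W hW
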